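/- Let H be a complex Hilbert space, let A be a bounded nonzero linear operator on H, and let R be a real number with R ≥ 2‖A‖. Then for every complex number λ, the following are equivalent: (1) λ belongs to the spectrum of A; (2) 1 belongs to the union of the spectrum of I − (1/R²)·(A − λI)(A − λI)* and the spectrum of I − (1/R²)·(A − λI)*(A − λI), where I is the identity operator and * denotes the Hilbert-space adjoint. -/
import Mathlib


open ContinuousLinearMap

private lemma isUnit_of_mul_isUnit_both {M : Type*} [Monoid M] {a b : M}
    (h1 : IsUnit (a * b)) (h2 : IsUnit (b * a)) : IsUnit a := by
  obtain ⟨u, hu⟩ := h1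
  obtain ⟨v, hv⟩ := h2
  have hay : a * (b * ↑u⁻¹) = 1 := by
    rw [← mul_assoc, ← hu, Units.mul_inv]
  have hxa : (↑v⁻¹ * b) * a = 1 := by
    rw [mul_assoc, ← hv, Units.inv_mul]
  have hxy : (↑v⁻¹ * b : M) = b * ↑u⁻¹ := by
    calc (↑v⁻¹ * b : M) = (↑v⁻¹ * b) * (a * (b * ↑u⁻¹)) := by rw [hay, mul_one]
    _ = ((↑v⁻¹ * b) * a) * (b * ↑u⁻¹) := by simp [mul_assoc]
    _ = b * ↑u⁻¹ := by rw [hxa, one_mul]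
  exact ⟨⟨a, b * ↑u⁻¹, hay, by rw [← hxy]; exact hxa⟩, rfl⟩

/-- Lemma 13 (corrected): for a bounded nonzero operator `A` on a complex Hilbert space
and `R ≥ 2‖A‖`, a complex number `λ` lies in the spectrum of `A` iff `1` lies in the
union of the spectra of `I - (1/R²)(A - λI)(A - λI)*` and `I - (1/R²)(A - λI)*(A - λI)`. -/
theorem lemma13_spectrum_equiv
    {H : Type*} [NormedAddCommGroup H] [InnerProductSpace ℂ H] [CompleteSpace H]
    (A : H →L[ℂ] H) (hA : A ≠ 0) (R : ℝ) (hR : 2 * ‖A‖ ≤ R) (lam : ℂ) :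
    lam ∈ spectrum ℂ A ↔
      (1 : ℂ) ∈
        spectrum ℂ (1 - (1 / (R : ℂ) ^ 2) •
            ((A - lam • 1) * adjoint (A - lam • 1))) ∪
        spectrum ℂ (1 - (1 / (R : ℂ) ^ 2) •
            (adjoint (A - lam • 1) * (A - lam • 1))) := by
  have hApos : (0 : ℝ) < ‖A‖ := norm_pos_iff.mpr hA
  have hRpos : (0 : ℝ) < R := lt_of_lt_of_le (by linarith) hR
  have hR0 : (R : ℂ) ≠ 0 := by exact_mod_cast hRpos.ne'
  have hc : (1 / (R : ℂ) ^ 2) ≠ 0 := by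
    simp [hR0]
  set c : ℂ := 1 / (R : ℂ) ^ 2 with hcdef
  have key : ∀ T : H →L[ℂ] H,
      ((1 : ℂ) ∈ spectrum ℂ (1 - c • T)) ↔ ¬ IsUnit T := by
    intro T
    rw [spectrum.mem_iff]
    have h1 : (algebraMap ℂ (H →L[ℂ] H)) 1 - (1 - c • T) = c • T := by
      simp [Algebra.algebraMap_eq_smul_one]
    rw [h1]
    constructor
    · intro h hT
      exact h (hT.smul (Units.mk0 c hc))
    · intro h hT
      apply h
      have : T = c⁻¹ • (c • T) := by rw [smul_smul, inv_mul_cancel₀ hc, one_smul]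
      rw [this]
      exact hT.smul (Units.mk0 c⁻¹ (inv_ne_zero hc))
  set B : H →L[ℂ] H := A - lam • 1 with hBdef
  have halg : (algebraMap ℂ (H →L[ℂ] H)) lam - A = -B := by
    simp [hBdef, Algebra.algebraMap_eq_smul_one]
  rw [Set.mem_union, key, key, spectrum.mem_iff, halg, IsUnit.neg_iff, ← not_and_or]
  constructor
  · intro h hand
    exact h (isUnit_of_mul_isUnit_both hand.1 hand.2)
  · intro h hB
    apply h
    have hBs : IsUnit (adjoint B) := by
      rw [← star_eq_adjoint]
      exact hB.star
    exact ⟨hB.mul hBs, hBs.mul hB⟩
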